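/- For every nonnegative integer n, the reduced factor complexity of the regular paperfolding sequence satisfies ρ_f^red(8n+7) = 6. -/

import Mathlib

/-- The reduction of a word: replace each maximal run of identical characters
by a single character. -/
def red {α : Type*} [DecidableEq α] (w : List α) : List α :=
  w.destutter (· ≠ ·)

/-- The length-`k` factor of the infinite sequence `x` (1-indexed) starting at
position `i`. -/
def factorAt {α : Type*} (x : ℕ → α) (i k : ℕ) : List α :=
  (List.range k).map (fun j => x (i + j))

/-- The reduced factor complexity: the number of length-`n` factors of `x`,
counted up to reduced-equivalence (`red v = red w`). -/
noncomputable def redFactorComplexity {α : Type*} [DecidableEq α]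
    (x : ℕ → α) (n : ℕ) : ℕ :=
  Set.ncard { u : List α | ∃ i ≥ 1, u = red (factorAt x i n) }

/-- The Thue–Morse sequence (1-indexed): `t n` is the parity of the number of
1's in the binary expansion of `n - 1`. -/
def thueMorse (n : ℕ) : Bool :=
  decide ((Nat.digits 2 (n - 1)).sum % 2 = 1)

/-- The number of alternations (occurrences of 01 or 10) in a binary word. -/
def alt (w : List Bool) : ℕ :=
  (List.zipWith (fun a b => a != b) w w.tail).count true

/-- The minimum number of alternations among length-`k` factors of Thue–Morse. -/
noncomputable def tmAltMin (k : ℕ) : ℕ :=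
  sInf { a : ℕ | ∃ i ≥ 1, a = alt (factorAt thueMorse i k) }

/-- The maximum number of alternations among length-`k` factors of Thue–Morse. -/
noncomputable def tmAltMax (k : ℕ) : ℕ :=
  sSup { a : ℕ | ∃ i ≥ 1, a = alt (factorAt thueMorse i k) }

/-- The Thue–Morse morphism `0 → 01`, `1 → 10`. -/
def mu (w : List Bool) : List Bool :=
  w.flatMap (fun b => if b then [true, false] else [false, true])

/-- The regular paperfolding sequence (1-indexed): writing `n = n' * 2^k` with
`n'` odd, `f n = 1` iff `n' ≡ 3 (mod 4)`. -/
def paperfold (n : ℕ) : Bool :=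
  decide ((n / 2 ^ (n.factorization 2)) % 4 = 3)

/-- The reduced abelian complexity: the number of length-`n` factors of `x`,
counted up to the equivalence identifying `v` and `w` whenever `red v` is a
rearrangement of the characters of `red w`. -/
noncomputable def redAbelianComplexity {α : Type*} [DecidableEq α]
    (x : ℕ → α) (n : ℕ) : ℕ :=
  Set.ncard { m : Multiset α | ∃ i ≥ 1, m = ↑(red (factorAt x i n)) }

/-!
A binary word `a :: t` reduces to the alternating word that starts with `a` and has one letter
more than `a :: t` has alternations, so a reduced factor is determined by its first letter and
its number of alternations. In the paperfolding sequence the letters at odd positions alternate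
`0, 1, 0, 1, …`, hence of the two transitions `2m + 1 → 2m + 2 → 2m + 3` exactly one is an
alternation. A factor of length `2k + 3` thus has `k + 1` alternations if it starts at an odd
position, and `k` plus its two boundary transitions otherwise; for `k = 4n + 2` the counts
`4n + 2, 4n + 3, 4n + 4` each occur with both first letters, giving six reduced factors.
-/

lemma alt_cons_cons (a b : Bool) (t : List Bool) :
    alt (a :: b :: t) = (a != b).toNat + alt (b :: t) := by
  cases a <;> cases b <;> simp [alt] <;> omega

lemma red_cons (a : Bool) (t : List Bool) :
    red (a :: t) = List.iterate not a (alt (a :: t) + 1) := by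
  induction t generalizing a with
  | nil => rfl
  | cons b t ih =>
    by_cases hab : a = b
    · subst hab
      rw [red, List.destutter_cons_cons, if_neg (not_not.2 rfl), ← List.destutter_cons', ← red,
        ih, alt_cons_cons]
      simp
    · obtain rfl : b = !a := by cases a <;> cases b <;> simp_all
      rw [red, List.destutter_cons_cons, if_pos hab, ← List.destutter_cons', ← red, ih,
        alt_cons_cons]
      simp [Nat.add_comm 1]

lemma iterate_not_succ_injective :
    Function.Injective fun p : Bool × ℕ => List.iterate not p.1 (p.2 + 1) := by
  rintro ⟨b, r⟩ ⟨c, s⟩ h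
  have hlen := congrArg List.length h
  simp only [List.iterate, List.cons.injEq, List.length_cons, List.length_iterate] at h hlen
  exact Prod.ext h.1 (by simpa using hlen)

lemma factorAt_succ {α : Type*} (x : ℕ → α) (i k : ℕ) :
    factorAt x i (k + 1) = x i :: factorAt x (i + 1) k := by
  simp only [factorAt, List.range_succ_eq_map, List.map_cons, List.map_map]
  congr 1
  exact List.map_congr_left fun j _ => by simp [Nat.add_assoc, Nat.add_comm 1]

lemma alt_factorAt_succ (x : ℕ → Bool) (i k : ℕ) :
    alt (factorAt x i (k + 1)) = ∑ j ∈ Finset.range k, (x (i + j) != x (i + j + 1)).toNat := by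
  induction k generalizing i with
  | zero => simp [factorAt, alt]
  | succ k ih =>
    rw [factorAt_succ, factorAt_succ, alt_cons_cons, ← factorAt_succ, ih,
      Finset.sum_range_succ', add_comm]
    refine congrArg₂ _ (Finset.sum_congr rfl fun j _ => ?_) rfl
    rw [show i + 1 + j = i + (j + 1) by omega]

lemma red_factorAt_succ (x : ℕ → Bool) (i k : ℕ) :
    red (factorAt x i (k + 1)) = List.iterate not (x i) (alt (factorAt x i (k + 1)) + 1) := by
  rw [factorAt_succ]
  exact red_cons _ _

lemma toNat_bne_add_toNat_bne_not (a b : Bool) : (a != b).toNat + (b != !a).toNat = 1 := by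
  cases a <;> cases b <;> rfl

lemma sum_range_two_mul_toNat_bne {x : ℕ → Bool} {i : ℕ}
    (hx : ∀ j, x (i + 2 * j + 2) = !x (i + 2 * j)) (t : ℕ) :
    ∑ j ∈ Finset.range (2 * t), (x (i + j) != x (i + j + 1)).toNat = t := by
  induction t with
  | zero => simp
  | succ t ih =>
    rw [Nat.mul_succ, Finset.sum_range_succ, Finset.sum_range_succ, ih, Nat.add_assoc,
      show i + (2 * t + 1) = i + 2 * t + 1 by omega,
      show i + 2 * t + 1 + 1 = i + 2 * t + 2 by omega, hx, toNat_bne_add_toNat_bne_not]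

lemma paperfold_of_mod_four_eq_one {m : ℕ} (h : m % 4 = 1) : paperfold m = false := by
  rw [paperfold, Nat.factorization_eq_zero_of_not_dvd (by omega)]
  simp [h]

lemma paperfold_of_mod_four_eq_three {m : ℕ} (h : m % 4 = 3) : paperfold m = true := by
  rw [paperfold, Nat.factorization_eq_zero_of_not_dvd (by omega)]
  simp [h]

lemma paperfold_two_mul (m : ℕ) : paperfold (2 * m) = paperfold m := by
  rcases eq_or_ne m 0 with rfl | hm
  · rfl
  have h : (2 * m).factorization 2 = m.factorization 2 + 1 := by
    simp [Nat.factorization_mul two_ne_zero hm, Nat.prime_two.factorization_self, add_comm]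
  rw [paperfold, paperfold, h, pow_succ', Nat.mul_div_mul_left _ _ two_pos]

lemma paperfold_of_mod_two_eq_zero {m : ℕ} (h : m % 2 = 0) :
    paperfold m = paperfold (m / 2) := by
  have := paperfold_two_mul (m / 2)
  rwa [Nat.mul_div_cancel' (Nat.dvd_of_mod_eq_zero h)] at this

lemma paperfold_two_mul_add_three (m : ℕ) : paperfold (2 * m + 3) = !paperfold (2 * m + 1) := by
  rcases Nat.mod_two_eq_zero_or_one m with h | h
  · rw [paperfold_of_mod_four_eq_three (m := 2 * m + 3) (by omega),
      paperfold_of_mod_four_eq_one (m := 2 * m + 1) (by omega)]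
    rfl
  · rw [paperfold_of_mod_four_eq_one (m := 2 * m + 3) (by omega),
      paperfold_of_mod_four_eq_three (m := 2 * m + 1) (by omega)]
    rfl

lemma alt_factorAt_paperfold_odd (a k : ℕ) :
    alt (factorAt paperfold (2 * a + 1) (2 * k + 1)) = k := by
  rw [alt_factorAt_succ]
  refine sum_range_two_mul_toNat_bne (fun j => ?_) k
  rw [show 2 * a + 1 + 2 * j + 2 = 2 * (a + j) + 3 by ring,
    show 2 * a + 1 + 2 * j = 2 * (a + j) + 1 by ring]
  exact paperfold_two_mul_add_three _

lemma alt_factorAt_paperfold_even (a k : ℕ) :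
    alt (factorAt paperfold (2 * a) (2 * k + 3)) =
      (paperfold (2 * a) != paperfold (2 * a + 1)).toNat + k +
        (paperfold (2 * (a + k) + 1) != paperfold (2 * (a + k) + 2)).toNat := by
  have hmid : ∑ j ∈ Finset.range (2 * k),
      (paperfold (2 * a + (j + 1)) != paperfold (2 * a + (j + 1) + 1)).toNat = k := by
    have hodd := alt_factorAt_paperfold_odd a k
    rw [alt_factorAt_succ] at hodd
    refine (Finset.sum_congr rfl fun j _ => ?_).trans hodd
    rw [show 2 * a + (j + 1) = 2 * a + 1 + j by ring]
  rw [alt_factorAt_succ, Finset.sum_range_succ', Finset.sum_range_succ, hmid,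
    show 2 * a + (2 * k + 1) = 2 * (a + k) + 1 by ring]
  simp only [Nat.add_zero, Nat.add_assoc, Nat.reduceAdd]
  omega

lemma alt_factorAt_paperfold_mem_Icc (i k : ℕ) :
    alt (factorAt paperfold i (2 * k + 3)) ∈ Set.Icc k (k + 2) := by
  obtain ⟨a, rfl | rfl⟩ : ∃ a, i = 2 * a + 1 ∨ i = 2 * a := ⟨i / 2, by omega⟩
  · rw [show 2 * k + 3 = 2 * (k + 1) + 1 by ring, alt_factorAt_paperfold_odd]
    constructor <;> omega
  · rw [alt_factorAt_paperfold_even]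
    have := Bool.toNat_le (paperfold (2 * a) != paperfold (2 * a + 1))
    have := Bool.toNat_le (paperfold (2 * (a + k) + 1) != paperfold (2 * (a + k) + 2))
    constructor <;> omega

lemma exists_paperfold_factor (n : ℕ) (b : Bool) {r : ℕ}
    (hr : r ∈ Set.Icc (4 * n + 2) (4 * n + 4)) :
    ∃ i ≥ 1, paperfold i = b ∧ alt (factorAt paperfold i (2 * (4 * n + 2) + 3)) = r := by
  obtain rfl | rfl | rfl : r = 4 * n + 2 ∨ r = 4 * n + 3 ∨ r = 4 * n + 4 := by
    obtain ⟨h₁, h₂⟩ := hr; omega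
  all_goals cases b
  case inr.inl.false =>
    exact ⟨1, le_rfl, paperfold_of_mod_four_eq_one rfl,
      alt_factorAt_paperfold_odd 0 (4 * n + 3)⟩
  case inr.inl.true =>
    exact ⟨3, by norm_num, paperfold_of_mod_four_eq_three rfl,
      alt_factorAt_paperfold_odd 1 (4 * n + 3)⟩
  case' inl.false => refine ⟨2 * 2, by norm_num, ?_, ?_⟩
  case' inl.true => refine ⟨2 * (4 * n + 3), by omega, ?_, ?_⟩
  case' inr.inr.false => refine ⟨2 * (12 * n + 1), by omega, ?_, ?_⟩
  case' inr.inr.true => refine ⟨2 * 12, by norm_num, ?_, ?_⟩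
  all_goals
    try rw [alt_factorAt_paperfold_even]
    simp (disch := omega) [paperfold_of_mod_four_eq_one, paperfold_of_mod_four_eq_three,
      paperfold_of_mod_two_eq_zero] <;> omega

theorem stmt17 (n : ℕ) :
    redFactorComplexity paperfold (8 * n + 7) = 6 := by
  have hfactors : { u : List Bool | ∃ i ≥ 1, u = red (factorAt paperfold i (8 * n + 7)) } =
      (fun p : Bool × ℕ => List.iterate not p.1 (p.2 + 1)) ''
        (Set.univ ×ˢ Set.Icc (4 * n + 2) (4 * n + 4)) := by
    rw [show 8 * n + 7 = 2 * (4 * n + 2) + 3 by ring]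
    ext u
    constructor
    · rintro ⟨i, -, rfl⟩
      exact ⟨(paperfold i, _), ⟨trivial, alt_factorAt_paperfold_mem_Icc i (4 * n + 2)⟩,
        (red_factorAt_succ paperfold i (2 * (4 * n + 2) + 2)).symm⟩
    · rintro ⟨⟨b, r⟩, ⟨-, hr⟩, rfl⟩
      obtain ⟨i, hi, rfl, rfl⟩ := exists_paperfold_factor n b hr
      exact ⟨i, hi, (red_factorAt_succ paperfold i (2 * (4 * n + 2) + 2)).symm⟩
  rw [redFactorComplexity, hfactors, Set.ncard_image_of_injective _ iterate_not_succ_injective,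
    Set.ncard_prod, Set.ncard_univ, Nat.card_eq_fintype_card, Fintype.card_bool,
    ← Finset.coe_Icc, Set.ncard_coe_finset, Nat.card_Icc]
  omega
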